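/- arXiv:2402.05385 — 5 statements merged into one kernel-verified Lean document; each statement's English description precedes it below -/
import Mathlib

section
/- Let r and p ≥ 2 be positive integers. Then the maximum over all nonnegative even integers α_1, ..., α_r with α_1 + ... + α_r = 2p of the quantity ((2p)!/p!) · ∏_{i=1}^r ((α_i/2)!/α_i!) is at most (100r)^{p-1}. -/
/-!
Write `β i = α i / 2`, so that `∑ β i = p`. The bounds `2ⁿ (n!)² ≤ (2n)! ≤ 4ⁿ (n!)²`
(the central binomial coefficient lies between `2ⁿ` and `4ⁿ`) show that the quantity is
at most `2ᵖ` times the multinomial coefficient `p! / ∏ β i!`. That coefficient is at most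
`mᵖ`, where `m ≤ min r p` is the number of nonzero `β i`, hence at most `p rᵖ⁻¹`;
and `2ᵖ p ≤ 100ᵖ⁻¹` for `p ≥ 2`.
-/

open Finset
open scoped Nat

namespace Nat

theorem two_pow_le_centralBinom : ∀ n, 2 ^ n ≤ centralBinom n
  | 0 => by simp
  | n + 1 => by
    refine Nat.le_of_mul_le_mul_left ?_ n.succ_pos
    calc (n + 1) * 2 ^ (n + 1) ≤ 2 * (2 * n + 1) * 2 ^ n := by
          rw [pow_succ]; nlinarith [Nat.zero_le (n * 2 ^ n)]
      _ ≤ 2 * (2 * n + 1) * centralBinom n := by gcongr; exact two_pow_le_centralBinom n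
      _ = (n + 1) * centralBinom (n + 1) := (succ_mul_centralBinom_succ n).symm

theorem centralBinom_mul_factorial_mul_factorial (n : ℕ) :
    centralBinom n * n ! * n ! = (2 * n)! := by
  simpa [centralBinom_eq_two_mul_choose, two_mul] using
    choose_mul_factorial_mul_factorial (le_add_right (n := n) (k := n))

theorem two_pow_mul_factorial_mul_factorial_le (n : ℕ) : 2 ^ n * n ! * n ! ≤ (2 * n)! := by
  rw [← centralBinom_mul_factorial_mul_factorial]
  gcongr
  exact two_pow_le_centralBinom n

theorem factorial_two_mul_le_four_pow_mul (n : ℕ) : (2 * n)! ≤ 4 ^ n * n ! * n ! := by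
  rw [← centralBinom_mul_factorial_mul_factorial]
  gcongr
  exact centralBinom_le_four_pow n

theorem multinomial_le_card_pow {ι : Type*} (s : Finset ι) (f : ι → ℕ) :
    multinomial s f ≤ #s ^ ∑ i ∈ s, f i := by
  classical
  set g : ι → ℕ := fun i => if i ∈ s then f i else 0
  have hfg : ∀ i ∈ s, f i = g i := fun i hi => (if_pos hi).symm
  have hg : g ∈ piAntidiag s (∑ i ∈ s, f i) := by
    refine mem_piAntidiag.2 ⟨(sum_congr rfl hfg).symm, fun i hi => ?_⟩
    by_contra h
    exact hi (if_neg h)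
  have hpow := sum_pow_eq_sum_piAntidiag s (fun _ => (1 : ℕ)) (∑ i ∈ s, f i)
  simp only [sum_const, smul_eq_mul, mul_one, one_pow, prod_const_one, Nat.cast_id] at hpow
  rw [multinomial_congr hfg, hpow]
  exact single_le_sum (fun _ _ => Nat.zero_le _) hg

theorem multinomial_univ_le {ι : Type*} [Fintype ι] (f : ι → ℕ) (hf : 0 < ∑ i, f i) :
    multinomial univ f ≤ (∑ i, f i) * Fintype.card ι ^ (∑ i, f i - 1) := by
  classical
  set t := univ.filter (f · ≠ 0)
  have ht_sum : ∑ i ∈ t, f i = ∑ i, f i := sum_filter_ne_zero _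
  have ht_le_sum : #t ≤ ∑ i, f i := by
    simpa [ht_sum] using
      card_nsmul_le_sum t f 1 fun i hi => one_le_iff_ne_zero.2 (mem_filter.1 hi).2
  calc multinomial univ f = multinomial t f :=
        (multinomial_congr_of_sdiff (subset_univ t) (by simp [t]) fun _ _ => rfl).symm
    _ ≤ #t ^ ∑ i ∈ t, f i := multinomial_le_card_pow t f
    _ = #t * #t ^ (∑ i, f i - 1) := by rw [ht_sum, ← pow_succ']; congr 1; omega
    _ ≤ (∑ i, f i) * Fintype.card ι ^ (∑ i, f i - 1) := by gcongr; exact card_le_univ t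

theorem two_pow_mul_self_le_hundred_pow {p : ℕ} (hp : 2 ≤ p) : 2 ^ p * p ≤ 100 ^ (p - 1) := by
  induction p, hp using Nat.le_induction with
  | base => norm_num
  | succ n _ ih =>
    obtain ⟨k, rfl⟩ : ∃ k, n = k + 1 := ⟨n - 1, by omega⟩
    simp only [Nat.add_sub_cancel, pow_succ] at ih ⊢
    nlinarith [Nat.zero_le (2 ^ k * k)]

theorem factorial_two_mul_mul_prod_factorial_le {ι : Type*} [Fintype ι] {p : ℕ} (hp : 2 ≤ p)
    (β : ι → ℕ) (hβ : ∑ i, β i = p) :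
    (2 * p)! * ∏ i, (β i)! ≤ (100 * Fintype.card ι) ^ (p - 1) * (p ! * ∏ i, (2 * β i)!) := by
  set B := ∏ i, (β i)!
  set R := Fintype.card ι
  have hBM : B * multinomial univ β = p ! := hβ ▸ multinomial_spec univ β
  have hM : multinomial univ β ≤ p * R ^ (p - 1) := hβ ▸ multinomial_univ_le β (by omega)
  have hB : 2 ^ p * B * B ≤ ∏ i, (2 * β i)! := by
    calc 2 ^ p * B * B = ∏ i, 2 ^ β i * (β i)! * (β i)! := by
          rw [prod_mul_distrib, prod_mul_distrib, prod_pow_eq_pow_sum, hβ]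
      _ ≤ ∏ i, (2 * β i)! :=
          prod_le_prod' fun i _ => two_pow_mul_factorial_mul_factorial_le _
  calc (2 * p)! * B ≤ 4 ^ p * p ! * p ! * B := by
        gcongr; exact factorial_two_mul_le_four_pow_mul p
    _ = p ! * ((2 ^ p * multinomial univ β) * (2 ^ p * B * B)) := by
        rw [← hBM, show 4 ^ p = 2 ^ p * 2 ^ p by rw [← mul_pow]; norm_num]; ring
    _ ≤ p ! * ((2 ^ p * (p * R ^ (p - 1))) * ∏ i, (2 * β i)!) := by gcongr
    _ = p ! * ((2 ^ p * p) * R ^ (p - 1) * ∏ i, (2 * β i)!) := by ring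
    _ ≤ p ! * (100 ^ (p - 1) * R ^ (p - 1) * ∏ i, (2 * β i)!) := by
        gcongr; exact two_pow_mul_self_le_hundred_pow hp
    _ = (100 * R) ^ (p - 1) * (p ! * ∏ i, (2 * β i)!) := by rw [mul_pow]; ring

end Nat

theorem stmt_0_general (r p : ℕ) (hp : 2 ≤ p)
    (α : Fin r → ℕ) (heven : ∀ i, Even (α i)) (hsum : ∑ i, α i = 2 * p) :
    ((2 * p).factorial : ℝ) / (p.factorial : ℝ) *
      ∏ i, (((α i / 2).factorial : ℝ) / ((α i).factorial : ℝ))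
      ≤ (100 * (r : ℝ)) ^ (p - 1) := by
  have hα : ∀ i, 2 * (α i / 2) = α i := fun i => Nat.two_mul_div_two_of_even (heven i)
  have hβ : ∑ i, α i / 2 = p := by
    have : 2 * ∑ i, α i / 2 = 2 * p := by simp only [mul_sum, hα, hsum]
    omega
  have key := Nat.factorial_two_mul_mul_prod_factorial_le hp (fun i => α i / 2) hβ
  simp only [hα, Fintype.card_fin] at key
  rw [prod_div_distrib, div_mul_div_comm, div_le_iff₀ (by positivity)]
  exact_mod_cast key

/-- Lemma (wu). For positive integers `r` and `p ≥ 2`, for all nonnegative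
even integers `α 1, ..., α r` summing to `2p`,
`((2p)!/p!) · ∏ i, (α i / 2)! / (α i)! ≤ (100 r)^(p-1)`. -/
theorem stmt_0 (r p : ℕ) (hr : 1 ≤ r) (hp : 2 ≤ p)
    (α : Fin r → ℕ) (heven : ∀ i, Even (α i)) (hsum : ∑ i, α i = 2 * p) :
    ((2 * p).factorial : ℝ) / (p.factorial : ℝ) *
      ∏ i, (((α i / 2).factorial : ℝ) / ((α i).factorial : ℝ))
      ≤ (100 * (r : ℝ)) ^ (p - 1) :=
  stmt_0_general r p hp α heven hsum
end

section
/- For any positive even integer p and any nonnegative even integer α, if α > 2, then ((α/2)!/α!)·((β/2)!/β!) ≤ (((α-2)/2)!/(α-2)!)·(((β+2)/2)!/(β+2)!) whenever α > β + 2 and α, β are nonnegative even integers. -/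
/-!
Write `g k = k! / (2k)!`. Then `g (k + 1) = g k / (4k + 2)`, so the ratio `g (k + 1) / g k`
decreases in `k`; for `α = 2(a + 1)` and `β = 2b` with `b ≤ a` the claim
`g (a + 1) g b ≤ g a g (b + 1)` is exactly `g (a + 1) / g a ≤ g (b + 1) / g b`.
-/

open Nat

lemma factorial_div_factorial_two_mul_succ (k : ℕ) :
    ((k + 1)! / (2 * (k + 1))! : ℝ) = k ! / (2 * k)! / (4 * k + 2) := by
  rw [show 2 * (k + 1) = 2 * k + 1 + 1 by ring, factorial_succ, factorial_succ, factorial_succ]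
  push_cast
  field_simp
  ring

lemma factorial_div_factorial_two_mul_mul_le {a b : ℕ} (hba : b ≤ a) :
    ((a + 1)! / (2 * (a + 1))! : ℝ) * (b ! / (2 * b)!)
      ≤ (a ! / (2 * a)! : ℝ) * ((b + 1)! / (2 * (b + 1))!) := by
  rw [factorial_div_factorial_two_mul_succ, factorial_div_factorial_two_mul_succ,
    div_mul_eq_mul_div, mul_div_assoc]
  gcongr

/-- for nonnegative even integers `α, β` with `α > β + 2`,
`((α/2)!/α!)·((β/2)!/β!) ≤ (((α-2)/2)!/(α-2)!)·(((β+2)/2)!/(β+2)!)`. -/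
theorem stmt_1 (α β : ℕ) (hα : Even α) (hβ : Even β) (h : β + 2 < α) :
    (((α / 2).factorial : ℝ) / (α.factorial : ℝ)) *
      (((β / 2).factorial : ℝ) / (β.factorial : ℝ))
      ≤ ((((α - 2) / 2).factorial : ℝ) / ((α - 2).factorial : ℝ)) *
        ((((β + 2) / 2).factorial : ℝ) / ((β + 2).factorial : ℝ)) := by
  rw [Nat.even_iff] at hα hβ
  obtain ⟨a, rfl⟩ : ∃ a, α = 2 * (a + 1) := ⟨α / 2 - 1, by omega⟩
  obtain ⟨b, rfl⟩ : ∃ b, β = 2 * b := ⟨β / 2, by omega⟩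
  rw [show 2 * (a + 1) / 2 = a + 1 by omega, show (2 * (a + 1) - 2) = 2 * a by omega,
    show 2 * a / 2 = a by omega, show 2 * b / 2 = b by omega,
    show 2 * b + 2 = 2 * (b + 1) by ring, show 2 * (b + 1) / 2 = b + 1 by omega]
  exact factorial_div_factorial_two_mul_mul_le (by omega)
end

section
/- Let H ∈ R^{n×n} be symmetric with column space spanned by U (orthonormal columns), P_U the projection onto that space, and T = {A : (I-P_U)A(I-P_U) = 0}. Let Ĥ be any matrix with ‖Ĥ‖_1 ≤ ‖H‖_1 (trace norm), and set Δ = Ĥ - H and Δ_T^⊥ = (I - P_T)Δ = (I-P_U)Δ(I-P_U). Then ⟨sign(H), P_U Δ P_U⟩ + ‖Δ_T^⊥‖_1 ≤ 0. -/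
open Matrix

open ComplexOrder in
/-- The square root of a positive semidefinite matrix, as defined in Mathlib (Dec 2024)
(`Matrix.PosSemidef.sqrt`, since removed from Mathlib). -/
noncomputable def Matrix.PosSemidef.sqrt {n : Type*} [Fintype n] [DecidableEq n]
    {𝕜 : Type*} [RCLike 𝕜] {A : Matrix n n 𝕜} (hA : A.PosSemidef) : Matrix n n 𝕜 :=
  hA.1.eigenvectorUnitary.1 * diagonal ((↑) ∘ (√·) ∘ hA.1.eigenvalues) *
  (star hA.1.eigenvectorUnitary : Matrix n n 𝕜)

/-- The trace (nuclear) norm of a real matrix: the sum of its singular values,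
i.e. `tr √(AᵀA)`. -/
noncomputable def traceNorm {n : ℕ} (A : Matrix (Fin n) (Fin n) ℝ) : ℝ :=
  ((Matrix.posSemidef_conjTranspose_mul_self A).sqrt).trace

/-- The matrix sign of a real symmetric matrix `H`: if `H = Q diag(λ) Qᵀ` is a spectral
decomposition, `sign H = Q diag(sign λ) Qᵀ`. -/
noncomputable def matSign {n : ℕ} (H : Matrix (Fin n) (Fin n) ℝ) (hH : H.IsHermitian) :
    Matrix (Fin n) (Fin n) ℝ :=
  (hH.eigenvectorUnitary : Matrix (Fin n) (Fin n) ℝ) *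
    Matrix.diagonal (fun i => Real.sign (hH.eigenvalues i)) *
    star (hH.eigenvectorUnitary : Matrix (Fin n) (Fin n) ℝ)

/-! The trace norm is dual to the spectral norm: `tr (Bᵀ A) ≤ ‖A‖₁` whenever `Bᵀ B ≤ 1`, with
equality for `B = A (Aᵀ A)^(-1/2)`. With `P = U Uᵀ` and `Q = 1 - P`, the contraction `sign H`
lives in the `P`-block and satisfies `tr (sign H * H) = ‖H‖₁`, while `Q W Q`, for `W` attaining
`‖Q Δ Q‖₁`, lives in the `Q`-block; so `B = sign H + Q W Q` is again a contraction. Testing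
`Ĥ = H + Δ` against `B` gives `‖H‖₁ + ⟨sign H, P Δ P⟩ + ‖Q Δ Q‖₁ ≤ ‖Ĥ‖₁ ≤ ‖H‖₁`. -/

lemma Real.sign_mul_sign_le_one (x : ℝ) : Real.sign x * Real.sign x ≤ 1 := by
  rcases Real.sign_apply_eq x with h | h | h <;> rw [h] <;> norm_num

lemma Real.sign_mul_eq_norm (x : ℝ) : Real.sign x * x = ‖x‖ := by
  rcases lt_trichotomy x 0 with h | rfl | h
  · rw [Real.sign_of_neg h, Real.norm_of_nonpos h.le]; ring
  · simp
  · rw [Real.sign_of_pos h, Real.norm_of_nonneg h.le, one_mul]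

lemma Real.sign_eq_inv_abs_mul (x : ℝ) : Real.sign x = |x|⁻¹ * x := by
  rcases lt_trichotomy x 0 with h | rfl | h
  · rw [Real.sign_of_neg h, abs_of_neg h, inv_neg, neg_mul, inv_mul_cancel₀ h.ne]
  · simp
  · rw [Real.sign_of_pos h, abs_of_pos h, inv_mul_cancel₀ h.ne']

section StarOrderedRing

variable {R : Type*} [Ring R] [StarRing R] [PartialOrder R] [StarOrderedRing R]

lemma star_mul_self_mul_le_one {a b : R} (ha : star a * a ≤ 1) (hb : star b * b ≤ 1) :
    star (a * b) * (a * b) ≤ 1 :=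
  calc star (a * b) * (a * b) = star b * (star a * a) * b := by simp only [star_mul, mul_assoc]
    _ ≤ star b * 1 * b := star_left_conjugate_le_conjugate ha b
    _ = star b * b := by rw [mul_one]
    _ ≤ 1 := hb

lemma IsStarProjection.star_mul_self_le_one {p : R} (hp : IsStarProjection p) :
    star p * p ≤ 1 := by
  rw [hp.isSelfAdjoint.star_eq, hp.isIdempotentElem.eq]
  exact hp.le_one

lemma IsStarProjection.star_mul_self_le_of_mul_eq {p a : R} (hp : IsStarProjection p)
    (ha : star a * a ≤ 1) (hap : a * p = a) : star a * a ≤ p :=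
  calc star a * a = star p * (star a * a) * p := by
        conv_lhs => rw [← hap]
        simp only [star_mul, mul_assoc]
    _ ≤ star p * 1 * p := star_left_conjugate_le_conjugate ha p
    _ = p := by rw [mul_one, hp.isSelfAdjoint.star_eq, hp.isIdempotentElem.eq]

lemma IsStarProjection.star_add_mul_add_le_one {p a b : R} (hp : IsStarProjection p)
    (ha : star a * a ≤ 1) (hb : star b * b ≤ 1) (hap : a * p = a) (hbp : b * (1 - p) = b)
    (hab : star a * b = 0) : star (a + b) * (a + b) ≤ 1 := by
  have hba : star b * a = 0 := by rw [← star_star a, ← star_mul, hab, star_zero]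
  calc star (a + b) * (a + b) = star a * a + star b * b := by
        simp only [star_add, add_mul, mul_add, hab, hba, add_zero, zero_add]
    _ ≤ p + (1 - p) := add_le_add (hp.star_mul_self_le_of_mul_eq ha hap)
        (hp.one_sub.star_mul_self_le_of_mul_eq hb hbp)
    _ = 1 := add_sub_cancel p 1

end StarOrderedRing

lemma Matrix.isStarProjection_mul_conjTranspose_self {m k α : Type*} [Fintype m] [Fintype k]
    [DecidableEq k] [Semiring α] [StarRing α] (U : Matrix m k α) (hU : Uᴴ * U = 1) :
    IsStarProjection (U * Uᴴ) where
  isIdempotentElem := by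
    rw [IsIdempotentElem, Matrix.mul_assoc, ← Matrix.mul_assoc Uᴴ, hU, Matrix.one_mul]
  isSelfAdjoint := by rw [IsSelfAdjoint, star_eq_conjTranspose, conjTranspose_mul,
    conjTranspose_conjTranspose]

open scoped MatrixOrder

lemma cfc_mul_of_fintype {m 𝕜 : Type*} [Fintype m] [DecidableEq m] [RCLike 𝕜] (f g : ℝ → ℝ)
    (A : Matrix m m 𝕜) : cfc (fun x => f x * g x) A = cfc f A * cfc g A :=
  cfc_mul f g A (finite_real_spectrum.continuousOn f) (finite_real_spectrum.continuousOn g)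

lemma trace_star_mul_le_sum_sqrt_diag {m : Type*} [Fintype m] (X Y : Matrix m m ℝ) :
    (star X * Y).trace ≤ ∑ i, √((star X * X) i i) * √((star Y * Y) i i) := by
  simp only [trace, diag, star_eq_conjTranspose, mul_apply, conjTranspose_apply, star_trivial]
  gcongr with i
  simpa only [sq] using Real.sum_mul_le_sqrt_mul_sqrt Finset.univ (fun k => X k i) (fun k => Y k i)

open ComplexOrder in
lemma Matrix.PosSemidef.sqrt_eq_cfcSqrt {m 𝕜 : Type*} [Fintype m] [DecidableEq m] [RCLike 𝕜]
    {A : Matrix m m 𝕜} (hA : A.PosSemidef) : hA.sqrt = CFC.sqrt A := by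
  rw [CFC.sqrt_eq_real_sqrt A hA.nonneg, cfcₙ_eq_cfc, hA.1.cfc_eq, IsHermitian.cfc,
    Unitary.conjStarAlgAut_apply, PosSemidef.sqrt]

section TraceNorm

variable {n : ℕ}

lemma traceNorm_eq_trace_abs (A : Matrix (Fin n) (Fin n) ℝ) :
    traceNorm A = (CFC.abs A).trace := by
  rw [traceNorm, PosSemidef.sqrt_eq_cfcSqrt, CFC.abs, star_eq_conjTranspose]

lemma traceNorm_eq_sum_sqrt_eigenvalues (A : Matrix (Fin n) (Fin n) ℝ) :
    traceNorm A = ∑ i, √((posSemidef_conjTranspose_mul_self A).1.eigenvalues i) := by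
  rw [traceNorm, PosSemidef.sqrt, trace_mul_cycle, Unitary.coe_star_mul_self, one_mul,
    trace_diagonal]
  rfl

lemma trace_star_mul_le_traceNorm (A B : Matrix (Fin n) (Fin n) ℝ) (hB : star B * B ≤ 1) :
    (star B * A).trace ≤ traceNorm A := by
  -- Compute the trace in an eigenbasis of `Aᵀ A` and apply Cauchy–Schwarz column by column.
  set hN := (posSemidef_conjTranspose_mul_self A).1
  set Φ : Matrix (Fin n) (Fin n) ℝ := (hN.eigenvectorUnitary : Matrix (Fin n) (Fin n) ℝ)
  have hΦ : Φ * star Φ = 1 := Unitary.mul_star_self_of_mem hN.eigenvectorUnitary.2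
  have hAΦ : star (A * Φ) * (A * Φ) = diagonal hN.eigenvalues := by
    have h := hN.conjStarAlgAut_star_eigenvectorUnitary
    rw [Unitary.conjStarAlgAut_apply, Unitary.coe_star, star_star] at h
    rw [star_mul, mul_assoc, ← mul_assoc (star A), star_eq_conjTranspose A, ← mul_assoc]
    exact h
  have hBΦ : star (B * Φ) * (B * Φ) ≤ 1 :=
    star_mul_self_mul_le_one hB (Unitary.coe_star_mul_self _).le
  calc (star B * A).trace = (star (B * Φ) * (A * Φ)).trace := by
        rw [star_mul, mul_assoc, trace_mul_comm (star Φ), mul_assoc, mul_assoc,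
          hΦ, mul_one]
    _ ≤ ∑ i, √((star (B * Φ) * (B * Φ)) i i) * √((star (A * Φ) * (A * Φ)) i i) :=
        trace_star_mul_le_sum_sqrt_diag _ _
    _ ≤ ∑ i, √(hN.eigenvalues i) := by
        gcongr with i
        rw [hAΦ, diagonal_apply_eq]
        refine mul_le_of_le_one_left (Real.sqrt_nonneg _) (Real.sqrt_le_one.mpr ?_)
        simpa using (Matrix.le_iff.mp hBΦ).diag_nonneg (i := i)
    _ = traceNorm A := (traceNorm_eq_sum_sqrt_eigenvalues A).symm

lemma exists_star_mul_self_le_one_trace_eq_traceNorm (A : Matrix (Fin n) (Fin n) ℝ) :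
    ∃ W : Matrix (Fin n) (Fin n) ℝ, star W * W ≤ 1 ∧ (star W * A).trace = traceNorm A := by
  set N := star A * A
  set C := cfc (fun x : ℝ => (√x)⁻¹) N
  have hC : star C = C := IsSelfAdjoint.star_eq (cfc_predicate _ N)
  have hCN : C * N = cfc Real.sqrt N :=
    calc C * N = cfc (fun x : ℝ => (√x)⁻¹ * x) N := by rw [cfc_mul_of_fintype, cfc_id' ℝ N]
      _ = cfc Real.sqrt N := by simp only [inv_mul_eq_div, Real.div_sqrt]
  refine ⟨A * C, ?_, ?_⟩
  · calc star (A * C) * (A * C) = C * N * C := by simp only [star_mul, hC, N, mul_assoc]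
      _ = cfc (fun x : ℝ => √x * (√x)⁻¹) N := by rw [hCN, cfc_mul_of_fintype]
      _ ≤ 1 := cfc_le_one _ N fun _ _ => mul_inv_le_one
  · calc (star (A * C) * A).trace = (C * N).trace := by simp only [star_mul, hC, N, mul_assoc]
      _ = traceNorm A := by
        rw [hCN, traceNorm_eq_trace_abs, CFC.abs, CFC.sqrt_eq_real_sqrt _ (star_mul_self_nonneg A),
          cfcₙ_eq_cfc]

lemma matSign_eq_cfc {H : Matrix (Fin n) (Fin n) ℝ} (hH : H.IsHermitian) :
    matSign H hH = cfc Real.sign H := by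
  rw [hH.cfc_eq, IsHermitian.cfc, Unitary.conjStarAlgAut_apply, matSign]
  rfl

section matSign

variable {H : Matrix (Fin n) (Fin n) ℝ} (hH : H.IsHermitian)
include hH

lemma isSelfAdjoint_matSign : IsSelfAdjoint (matSign H hH) := by
  rw [matSign_eq_cfc]
  exact cfc_predicate _ H

lemma star_matSign_mul_self_le_one : star (matSign H hH) * matSign H hH ≤ 1 := by
  rw [(isSelfAdjoint_matSign hH).star_eq, matSign_eq_cfc, ← cfc_mul_of_fintype]
  exact cfc_le_one _ H fun x _ => Real.sign_mul_sign_le_one x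

lemma trace_matSign_mul_self : (matSign H hH * H).trace = traceNorm H := by
  rw [matSign_eq_cfc, traceNorm_eq_trace_abs, CFC.abs_eq_cfc_norm H hH.isSelfAdjoint,
    ← funext Real.sign_mul_eq_norm, cfc_mul_of_fintype, cfc_id' ℝ H hH.isSelfAdjoint]

lemma matSign_mul_of_mul_eq_self {P : Matrix (Fin n) (Fin n) ℝ} (hHP : H * P = H) :
    matSign H hH * P = matSign H hH := by
  rw [matSign_eq_cfc, funext Real.sign_eq_inv_abs_mul, cfc_mul_of_fintype,
    cfc_id' ℝ H hH.isSelfAdjoint, mul_assoc, hHP]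

lemma mul_matSign_of_mul_eq_self {P : Matrix (Fin n) (Fin n) ℝ} (hPH : P * H = H) :
    P * matSign H hH = matSign H hH := by
  rw [matSign_eq_cfc, funext fun x => (Real.sign_eq_inv_abs_mul x).trans (mul_comm _ _),
    cfc_mul_of_fintype, cfc_id' ℝ H hH.isSelfAdjoint, ← mul_assoc, hPH]

end matSign

lemma le_traceNorm_add {H P : Matrix (Fin n) (Fin n) ℝ} (hH : H.IsHermitian)
    (hP : IsStarProjection P) (hPH : P * H = H) (Δ : Matrix (Fin n) (Fin n) ℝ) :
    traceNorm H + ((matSign H hH)ᵀ * (P * Δ * P)).trace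
      + traceNorm ((1 - P) * Δ * (1 - P)) ≤ traceNorm (H + Δ) := by
  set S := matSign H hH
  set Q := 1 - P
  have hQ : IsStarProjection Q := hP.one_sub
  have hHP : H * P = H := by
    simpa only [star_mul, hP.isSelfAdjoint.star_eq, hH.isSelfAdjoint.star_eq] using
      congrArg star hPH
  have hSP : S * P = S := matSign_mul_of_mul_eq_self hH hHP
  have hPS : P * S = S := mul_matSign_of_mul_eq_self hH hPH
  have hS : star S = S := (isSelfAdjoint_matSign hH).star_eq
  have hSQ : S * Q = 0 := by rw [mul_sub, mul_one, hSP, sub_self]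
  have hQH : Q * H = 0 := by rw [sub_mul, one_mul, hPH, sub_self]
  obtain ⟨W, hW, hWtr⟩ := exists_star_mul_self_le_one_trace_eq_traceNorm (Q * Δ * Q)
  have hB : star (S + Q * W * Q) * (S + Q * W * Q) ≤ 1 :=
    hP.star_add_mul_add_le_one (star_matSign_mul_self_le_one hH)
      (star_mul_self_mul_le_one (star_mul_self_mul_le_one hQ.star_mul_self_le_one hW)
        hQ.star_mul_self_le_one)
      hSP (by rw [mul_assoc, hQ.isIdempotentElem.eq])
      (by rw [hS, ← mul_assoc, ← mul_assoc, hSQ, zero_mul, zero_mul])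
  have hPΔP : (Sᵀ * (P * Δ * P)).trace = (S * Δ).trace := by
    rw [← conjTranspose_eq_transpose_of_trivial, ← star_eq_conjTranspose, hS, ← mul_assoc,
      ← mul_assoc, hSP, trace_mul_cycle, hPS]
  have hQΔQ : traceNorm (Q * Δ * Q) = (Q * star W * Q * (H + Δ)).trace := by
    rw [← hWtr, mul_add, mul_assoc _ Q H, hQH, mul_zero, zero_add]
    simp only [Matrix.mul_assoc]
    rw [trace_mul_comm Q]
    simp only [Matrix.mul_assoc]
  calc traceNorm H + (Sᵀ * (P * Δ * P)).trace + traceNorm (Q * Δ * Q)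
      = (star (S + Q * W * Q) * (H + Δ)).trace := by
        rw [hPΔP, hQΔQ, ← trace_matSign_mul_self hH, star_add, hS, star_mul, star_mul,
          hQ.isSelfAdjoint.star_eq, add_mul, mul_add S, trace_add, trace_add, ← mul_assoc]
    _ ≤ traceNorm (H + Δ) := trace_star_mul_le_traceNorm _ _ hB

end TraceNorm

/-- Let `H ∈ ℝ^{n×n}` be symmetric with column space spanned by the
orthonormal columns of `U` (so `P_U H = H` for `P_U = U Uᵀ`).  If `‖Ĥ‖₁ ≤ ‖H‖₁` in
trace norm, then with `Δ = Ĥ - H` and `Δ_T^⊥ = (1-P_U) Δ (1-P_U)`,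
`⟨sign(H), P_U Δ P_U⟩ + ‖Δ_T^⊥‖₁ ≤ 0`. -/
theorem stmt_6 {n r : ℕ} (H Hhat : Matrix (Fin n) (Fin n) ℝ)
    (U : Matrix (Fin n) (Fin r) ℝ) (hU : Uᵀ * U = 1)
    (hH : H.IsHermitian) (hcol : U * Uᵀ * H = H)
    (hopt : traceNorm Hhat ≤ traceNorm H) :
    ((matSign H hH)ᵀ * (U * Uᵀ * (Hhat - H) * (U * Uᵀ))).trace
      + traceNorm ((1 - U * Uᵀ) * (Hhat - H) * (1 - U * Uᵀ)) ≤ 0 := by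
  have hP : IsStarProjection (U * Uᵀ) := by
    simpa only [conjTranspose_eq_transpose_of_trivial] using
      isStarProjection_mul_conjTranspose_self U (by rwa [conjTranspose_eq_transpose_of_trivial])
  have h := le_traceNorm_add hH hP hcol (Hhat - H)
  rw [add_sub_cancel] at h
  linarith
end

section
/- Let u, v be independent uniform on S^{n-1}, r ≤ n, and Z = n²(u_{r+1:} u_{:r}^T ⊗ v_{:r} v^T) + n²(u_{:r} u_{r+1:}^T ⊗ v v_{:r}^T). Then E[Z²] ⪯ 4nr·I_{n²} in the Loewner order. -/
open MeasureTheory Matrix Kronecker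

/-- `μ` is the uniform distribution on the unit sphere `S^{n-1} ⊂ ℝ^n`. -/
def IsUniformOnSphere {n : ℕ} (μ : Measure (EuclideanSpace ℝ (Fin n))) : Prop :=
  IsProbabilityMeasure μ ∧
  μ (Metric.sphere (0 : EuclideanSpace ℝ (Fin n)) 1) = 1 ∧
  ∀ Q : EuclideanSpace ℝ (Fin n) ≃ₗᵢ[ℝ] EuclideanSpace ℝ (Fin n),
    Measure.map Q μ = μ

/-- `u_{:r}` : the vector `u` with all coordinates after the `r`-th zeroed out. -/
def truncLow {n : ℕ} (r : ℕ) (u : EuclideanSpace ℝ (Fin n)) : Fin n → ℝ :=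
  fun i => if (i : ℕ) < r then u i else 0

/-- `u_{r+1:}` : the vector `u` with its first `r` coordinates zeroed out. -/
def truncHigh {n : ℕ} (r : ℕ) (u : EuclideanSpace ℝ (Fin n)) : Fin n → ℝ :=
  fun i => if r ≤ (i : ℕ) then u i else 0

/-- The random matrix `Z = n²(u_{r+1:} u_{:r}ᵀ ⊗ v_{:r} vᵀ) + n²(u_{:r} u_{r+1:}ᵀ ⊗ v v_{:r}ᵀ)`. -/
noncomputable def Zmat {n : ℕ} (r : ℕ)
    (q : EuclideanSpace ℝ (Fin n) × EuclideanSpace ℝ (Fin n)) :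
    Matrix (Fin n × Fin n) (Fin n × Fin n) ℝ :=
  (n : ℝ) ^ 2 • (Matrix.vecMulVec (truncHigh r q.1) (truncLow r q.1) ⊗ₖ
      Matrix.vecMulVec (truncLow r q.2) (fun a => q.2 a))
  + (n : ℝ) ^ 2 • (Matrix.vecMulVec (truncLow r q.1) (truncHigh r q.1) ⊗ₖ
      Matrix.vecMulVec (fun a => q.2 a) (truncLow r q.2))

/-!
Write `A = u_{r+1:} u_{:r}ᵀ` and `B = v_{:r} vᵀ`, so that `Z = n² (A ⊗ B + Aᵀ ⊗ Bᵀ)`. Since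
`u_{:r} ⟂ u_{r+1:}` we have `A² = 0`, hence `Z² = n⁴ (AAᵀ ⊗ BBᵀ + AᵀA ⊗ BᵀB)`; every factor has
the shape `‖c ⊙ x‖² (a ⊙ x)(b ⊙ x)ᵀ` for 0/1 masks `a, b, c`, and by independence the expectation
of each Kronecker product is the Kronecker product of the expectations.

Those expectations come from invariance of the uniform measure under reflections: off-diagonal
terms are odd under the reflection through the line `ℝ e_i`, swapping coordinates gives
`E v_i² = 1/n`, and the reflection taking `e_i` to `(3 e_i ± 4 e_j)/5` gives
`E v_i² v_j² = E v_i⁴ / 3`, hence `E v_i⁴ = 3/(n(n+2))`. So `E[Z²]` is diagonal, and each diagonal entry is at most `4nr`.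
-/

namespace EuclideanSpace

open Submodule

variable {ι : Type*} [Fintype ι]

lemma reflection_span_singleton_apply (w v : EuclideanSpace ℝ ι) (k : ι) :
    reflection (ℝ ∙ w) v k = 2 * (inner ℝ w v / ‖w‖ ^ 2) * w k - v k := by
  simp [reflection_singleton_apply, mul_assoc]

variable [DecidableEq ι]

lemma reflection_single_apply (i : ι) (v : EuclideanSpace ℝ ι) (k : ι) :
    reflection (ℝ ∙ single i (1 : ℝ)) v k = if k = i then v k else -v k := by
  rw [reflection_span_singleton_apply]
  split_ifs with hki
  · subst hki; simp [inner_single_left]; ring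
  · simp [hki]

lemma reflection_single_add_single_apply {i j : ι} (hij : i ≠ j) (v : EuclideanSpace ℝ ι) :
    reflection (ℝ ∙ (single i (1 : ℝ) + single j 1)) v i = v j := by
  have hnorm : ‖single i (1 : ℝ) + single j 1‖ ^ 2 = 2 := by
    rw [real_norm_sq_eq]; simp [add_sq, Finset.sum_add_distrib, hij.symm]; norm_num
  rw [reflection_span_singleton_apply, hnorm]
  simp [inner_add_left, inner_single_left, hij]
  ring

lemma reflection_two_single_add_single_apply {i j : ι} (hij : i ≠ j) {s : ℝ} (hs : s ^ 2 = 1)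
    (v : EuclideanSpace ℝ ι) :
    reflection (ℝ ∙ (single i (2 : ℝ) + single j s)) v i = (3 * v i + 4 * s * v j) / 5 := by
  have hnorm : ‖single i (2 : ℝ) + single j s‖ ^ 2 = 5 := by
    rw [real_norm_sq_eq]; simp [add_sq, Finset.sum_add_distrib, hij.symm]; nlinarith
  rw [reflection_span_singleton_apply, hnorm]
  simp [inner_add_left, inner_single_left, hij]
  ring

end EuclideanSpace

section MatrixIntegral

variable {α β m m' k k' : Type*} [MeasurableSpace α] [MeasurableSpace β]

noncomputable def matrixIntegral (μ : Measure α) (M : α → Matrix m m' ℝ) : Matrix m m' ℝ :=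
  Matrix.of fun i j => ∫ x, M x i j ∂μ

lemma matrixIntegral_smul (μ : Measure α) (c : ℝ) (M : α → Matrix m m' ℝ) :
    matrixIntegral μ (fun x => c • M x) = c • matrixIntegral μ M := by
  ext i j; simp [matrixIntegral, integral_const_mul]

lemma matrixIntegral_add {μ : Measure α} {M N : α → Matrix m m' ℝ}
    (hM : ∀ i j, Integrable (fun x => M x i j) μ) (hN : ∀ i j, Integrable (fun x => N x i j) μ) :
    matrixIntegral μ (fun x => M x + N x) = matrixIntegral μ M + matrixIntegral μ N := by
  ext i j; simp [matrixIntegral, integral_add (hM i j) (hN i j)]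

lemma matrixIntegral_prod_kronecker (μ : Measure α) (ν : Measure β) [SFinite μ] [SFinite ν]
    (M : α → Matrix m m' ℝ) (N : β → Matrix k k' ℝ) :
    matrixIntegral (μ.prod ν) (fun q => M q.1 ⊗ₖ N q.2)
      = matrixIntegral μ M ⊗ₖ matrixIntegral ν N := by
  ext ⟨i, j⟩ ⟨i', j'⟩
  exact integral_prod_mul (fun x => M x i i') (fun y => N y j j')

end MatrixIntegral

lemma vecMulVec_kronecker_add_sq {R m k : Type*} [CommRing R] [Fintype m] [Fintype k]
    [DecidableEq m] [DecidableEq k] (x y : m → R) (z w : k → R) (hyx : y ⬝ᵥ x = 0) :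
    (vecMulVec x y ⊗ₖ vecMulVec z w + vecMulVec y x ⊗ₖ vecMulVec w z) ^ 2
      = ((y ⬝ᵥ y) • vecMulVec x x) ⊗ₖ ((w ⬝ᵥ w) • vecMulVec z z)
        + ((x ⬝ᵥ x) • vecMulVec y y) ⊗ₖ ((z ⬝ᵥ z) • vecMulVec w w) := by
  have hxy : x ⬝ᵥ y = 0 := by rwa [dotProduct_comm]
  simp only [sq, add_mul, mul_add, ← mul_kronecker_mul, vecMulVec_mul_vecMulVec, hyx, hxy,
    zero_smul, vecMulVec_smul, vecMulVec_zero, zero_mul, implies_true, kroneckerMap_zero_left,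
    zero_add, add_zero]
  exact add_comm _ _

section UniformSphere

variable {n : ℕ}

namespace IsUniformOnSphere

variable {μ : Measure (EuclideanSpace ℝ (Fin n))}

lemma ae_norm_eq_one (hμ : IsUniformOnSphere μ) : ∀ᵐ v ∂μ, ‖v‖ = 1 := by
  have := hμ.1
  have hsphere : ∀ᵐ v ∂μ, v ∈ Metric.sphere (0 : EuclideanSpace ℝ (Fin n)) 1 :=
    (ae_iff_measure_eq Metric.isClosed_sphere.measurableSet.nullMeasurableSet).mpr
      (hμ.2.1.trans measure_univ.symm)
  filter_upwards [hsphere] with v hv using mem_sphere_zero_iff_norm.mp hv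

lemma integral_sum_sq_mul (hμ : IsUniformOnSphere μ) (f : EuclideanSpace ℝ (Fin n) → ℝ) :
    ∫ v, (∑ p, v p ^ 2) * f v ∂μ = ∫ v, f v ∂μ :=
  integral_congr_ae <| by
    filter_upwards [hμ.ae_norm_eq_one] with v hv
    rw [← EuclideanSpace.real_norm_sq_eq, hv, one_pow, one_mul]

lemma integrable_of_continuous (hμ : IsUniformOnSphere μ) {f : EuclideanSpace ℝ (Fin n) → ℝ}
    (hf : Continuous f) : Integrable f μ := by
  have := hμ.1
  obtain ⟨C, hC⟩ := (isCompact_sphere (0 : EuclideanSpace ℝ (Fin n)) 1).exists_bound_of_continuousOn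
    hf.continuousOn
  refine Integrable.of_bound hf.aestronglyMeasurable C ?_
  filter_upwards [hμ.ae_norm_eq_one] with v hv using hC v (mem_sphere_zero_iff_norm.mpr hv)

lemma integral_comp (hμ : IsUniformOnSphere μ)
    (Q : EuclideanSpace ℝ (Fin n) ≃ₗᵢ[ℝ] EuclideanSpace ℝ (Fin n))
    (f : EuclideanSpace ℝ (Fin n) → ℝ) : ∫ v, f (Q v) ∂μ = ∫ v, f v ∂μ :=
  MeasurePreserving.integral_comp ⟨Q.continuous.measurable, hμ.2.2 Q⟩
    Q.toHomeomorph.measurableEmbedding f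

lemma integral_eq_zero_of_comp_eq_neg (hμ : IsUniformOnSphere μ)
    (Q : EuclideanSpace ℝ (Fin n) ≃ₗᵢ[ℝ] EuclideanSpace ℝ (Fin n))
    {f : EuclideanSpace ℝ (Fin n) → ℝ} (hf : ∀ v, f (Q v) = -f v) : ∫ v, f v ∂μ = 0 := by
  have h := hμ.integral_comp Q f
  simp only [hf, integral_neg] at h
  linarith

lemma integral_comp_coord (hμ : IsUniformOnSphere μ) (g : ℝ → ℝ) (i j : Fin n) :
    ∫ v, g (v i) ∂μ = ∫ v, g (v j) ∂μ := by
  rcases eq_or_ne i j with rfl | hij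
  · rfl
  rw [← hμ.integral_comp (Submodule.reflection
    (ℝ ∙ (EuclideanSpace.single i 1 + EuclideanSpace.single j 1))) (fun v => g (v i))]
  simp only [EuclideanSpace.reflection_single_add_single_apply hij]

lemma integral_coord_sq (hμ : IsUniformOnSphere μ) (i : Fin n) :
    ∫ v, v i ^ 2 ∂μ = 1 / n := by
  have := hμ.1
  have h := hμ.integral_sum_sq_mul 1
  simp only [Pi.one_apply, mul_one, integral_const, probReal_univ, smul_eq_mul] at h
  rw [integral_finsetSum _ fun p _ => hμ.integrable_of_continuous (by fun_prop)] at h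
  simp only [fun p => hμ.integral_comp_coord (· ^ 2) p i, Finset.sum_const, Finset.card_univ,
    Fintype.card_fin, nsmul_eq_mul] at h
  rw [eq_div_iff (Nat.cast_ne_zero.mpr i.pos.ne')]
  linarith

lemma integral_coord_sq_mul_coord_sq_of_ne (hμ : IsUniformOnSphere μ) {i j : Fin n}
    (hij : i ≠ j) : ∫ v, v i ^ 2 * v j ^ 2 ∂μ = (∫ v, v i ^ 4 ∂μ) / 3 := by
  have hrefl : ∀ s : ℝ, s ^ 2 = 1 → ∫ v, ((3 * v i + 4 * s * v j) / 5) ^ 4 ∂μ = ∫ v, v i ^ 4 ∂μ :=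
    fun s hs => by
      rw [← hμ.integral_comp (Submodule.reflection
        (ℝ ∙ (EuclideanSpace.single i 2 + EuclideanSpace.single j s))) (fun v => v i ^ 4)]
      simp only [EuclideanSpace.reflection_two_single_add_single_apply hij hs]
  -- adding the cases `s = 1` and `s = -1` cancels the odd moments
  have hsum := congrArg₂ (· + ·) (hrefl 1 (one_pow 2)) (hrefl (-1) (by norm_num))
  simp only at hsum
  rw [← integral_add (hμ.integrable_of_continuous (by fun_prop))
    (hμ.integrable_of_continuous (by fun_prop))] at hsum
  have hexpand : ∀ v : EuclideanSpace ℝ (Fin n),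
      ((3 * v i + 4 * 1 * v j) / 5) ^ 4 + ((3 * v i + 4 * (-1) * v j) / 5) ^ 4
        = 162 / 625 * v i ^ 4 + (1728 / 625 * (v i ^ 2 * v j ^ 2) + 512 / 625 * v j ^ 4) :=
    fun v => by ring
  simp only [hexpand] at hsum
  rw [integral_add (hμ.integrable_of_continuous (by fun_prop))
      (hμ.integrable_of_continuous (by fun_prop)),
    integral_add (hμ.integrable_of_continuous (by fun_prop))
      (hμ.integrable_of_continuous (by fun_prop)),
    integral_const_mul, integral_const_mul, integral_const_mul,
    hμ.integral_comp_coord (· ^ 4) j i] at hsum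
  linarith

lemma integral_coord_pow_four (hμ : IsUniformOnSphere μ) (i : Fin n) :
    ∫ v, v i ^ 4 ∂μ = 3 / (n * (n + 2)) := by
  have h := hμ.integral_sum_sq_mul (fun v => v i ^ 2)
  simp_rw [Finset.sum_mul] at h
  rw [hμ.integral_coord_sq,
    integral_finsetSum _ fun p _ => hμ.integrable_of_continuous (by fun_prop),
    ← Finset.add_sum_erase _ _ (Finset.mem_univ i),
    Finset.sum_congr rfl fun p hp => (hμ.integral_coord_sq_mul_coord_sq_of_ne
      (Finset.ne_of_mem_erase hp)).trans (by rw [hμ.integral_comp_coord (· ^ 4) p i]),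
    Finset.sum_const, Finset.card_erase_of_mem (Finset.mem_univ i), Finset.card_univ,
    Fintype.card_fin, nsmul_eq_mul, Nat.cast_sub i.pos] at h
  have hn : (0 : ℝ) < n := Nat.cast_pos.mpr i.pos
  norm_num [← pow_add] at h
  field_simp at h ⊢
  linear_combination h

lemma integral_coord_sq_mul_coord_sq (hμ : IsUniformOnSphere μ) (p i : Fin n) :
    ∫ v, v p ^ 2 * v i ^ 2 ∂μ = (if p = i then 3 else 1) / (n * (n + 2)) := by
  rcases eq_or_ne p i with rfl | hpi
  · simp only [← pow_add, if_true]; exact hμ.integral_coord_pow_four p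
  · rw [if_neg hpi, hμ.integral_coord_sq_mul_coord_sq_of_ne hpi, hμ.integral_coord_pow_four]
    ring

end IsUniformOnSphere

def maskedQuartic (c a b : Fin n → ℝ) (x : EuclideanSpace ℝ (Fin n)) : Matrix (Fin n) (Fin n) ℝ :=
  ((c * ⇑x) ⬝ᵥ (c * ⇑x)) • vecMulVec (a * ⇑x) (b * ⇑x)

noncomputable def maskedQuarticMean (c a b : Fin n → ℝ) (i : Fin n) : ℝ :=
  a i * b i * (∑ p, c p ^ 2 + 2 * c i ^ 2) / (n * (n + 2))

lemma continuous_maskedQuartic_apply (c a b : Fin n → ℝ) (i k : Fin n) :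
    Continuous fun v : EuclideanSpace ℝ (Fin n) => maskedQuartic c a b v i k := by
  simp only [maskedQuartic, Matrix.smul_apply, vecMulVec_apply, Pi.mul_apply, smul_eq_mul,
    dotProduct]
  fun_prop

namespace IsUniformOnSphere

variable {μ : Measure (EuclideanSpace ℝ (Fin n))}

lemma integral_maskedQuartic_of_ne (hμ : IsUniformOnSphere μ) (c a b : Fin n → ℝ) {i k : Fin n}
    (hik : i ≠ k) : ∫ v, maskedQuartic c a b v i k ∂μ = 0 := by
  refine hμ.integral_eq_zero_of_comp_eq_neg
    (Submodule.reflection (ℝ ∙ EuclideanSpace.single i 1)) fun v => ?_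
  simp only [maskedQuartic, Matrix.smul_apply, vecMulVec_apply, Pi.mul_apply, smul_eq_mul,
    dotProduct, EuclideanSpace.reflection_single_apply, ↓reduceIte, if_neg hik.symm]
  have hsq : ∀ p, c p * (if p = i then v p else -v p) * (c p * (if p = i then v p else -v p))
      = c p * v p * (c p * v p) := fun p => by split_ifs <;> ring
  simp only [hsq]
  ring

lemma integral_maskedQuartic_self (hμ : IsUniformOnSphere μ) (c a b : Fin n → ℝ) (i : Fin n) :
    ∫ v, maskedQuartic c a b v i i ∂μ = maskedQuarticMean c a b i := by
  have hexpand : ∀ v : EuclideanSpace ℝ (Fin n), maskedQuartic c a b v i i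
      = a i * b i * ∑ p, c p ^ 2 * (v p ^ 2 * v i ^ 2) := fun v => by
    simp only [maskedQuartic, Matrix.smul_apply, vecMulVec_apply, Pi.mul_apply, smul_eq_mul,
      dotProduct, Finset.mul_sum, Finset.sum_mul]
    exact Finset.sum_congr rfl fun p _ => by ring
  have hweights : ∀ p, c p ^ 2 * (if p = i then 3 else 1)
      = c p ^ 2 + 2 * (if p = i then c i ^ 2 else 0) := fun p => by
    split_ifs with hpi
    · subst hpi; ring
    · ring
  simp_rw [hexpand]
  rw [integral_const_mul,
    integral_finsetSum _ fun p _ => hμ.integrable_of_continuous (by fun_prop)]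
  simp_rw [integral_const_mul, hμ.integral_coord_sq_mul_coord_sq, mul_div_assoc', hweights,
    ← Finset.sum_div, Finset.sum_add_distrib, ← Finset.mul_sum, Finset.sum_ite_eq',
    Finset.mem_univ, if_true]
  rw [maskedQuarticMean]
  ring

lemma matrixIntegral_maskedQuartic (hμ : IsUniformOnSphere μ) (c a b : Fin n → ℝ) :
    matrixIntegral μ (maskedQuartic c a b) = diagonal (maskedQuarticMean c a b) := by
  ext i k
  rcases eq_or_ne i k with rfl | hik
  · rw [diagonal_apply_eq]; exact hμ.integral_maskedQuartic_self c a b i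
  · rw [diagonal_apply_ne _ hik]; exact hμ.integral_maskedQuartic_of_ne c a b hik

lemma integrable_maskedQuartic_kronecker (hμ : IsUniformOnSphere μ) (c a b c' a' b' : Fin n → ℝ)
    (x y : Fin n × Fin n) :
    Integrable (fun q : EuclideanSpace ℝ (Fin n) × EuclideanSpace ℝ (Fin n) =>
      (maskedQuartic c a b q.1 ⊗ₖ maskedQuartic c' a' b' q.2) x y) (μ.prod μ) :=
  (hμ.integrable_of_continuous (continuous_maskedQuartic_apply c a b x.1 y.1)).mul_prod
    (hμ.integrable_of_continuous (continuous_maskedQuartic_apply c' a' b' x.2 y.2))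

end IsUniformOnSphere

def lowMask (n r : ℕ) : Fin n → ℝ := fun i => if (i : ℕ) < r then 1 else 0

def highMask (n r : ℕ) : Fin n → ℝ := fun i => if r ≤ (i : ℕ) then 1 else 0

lemma truncLow_eq_lowMask_mul (r : ℕ) (u : EuclideanSpace ℝ (Fin n)) :
    truncLow r u = lowMask n r * ⇑u := by
  ext i; simp [truncLow, lowMask]

lemma truncHigh_eq_highMask_mul (r : ℕ) (u : EuclideanSpace ℝ (Fin n)) :
    truncHigh r u = highMask n r * ⇑u := by
  ext i; simp [truncHigh, highMask]

lemma lowMask_mul_dotProduct_highMask_mul (r : ℕ) (x : Fin n → ℝ) :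
    (lowMask n r * x) ⬝ᵥ (highMask n r * x) = 0 :=
  Finset.sum_eq_zero fun p _ => by
    simp only [lowMask, highMask, Pi.mul_apply]; split_ifs <;> first | omega | ring

lemma sum_lowMask_sq {r : ℕ} (hr : r ≤ n) : ∑ p, lowMask n r p ^ 2 = r := by
  simp [lowMask, Finset.sum_boole, Fin.card_filter_val_lt, hr]

lemma sum_highMask_sq {r : ℕ} (hr : r ≤ n) : ∑ p, highMask n r p ^ 2 = n - r := by
  have hsplit : ∀ p, highMask n r p ^ 2 = 1 - lowMask n r p ^ 2 := fun p => by
    simp only [lowMask, highMask]; split_ifs <;> first | omega | norm_num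
  simp [hsplit, Finset.sum_sub_distrib, sum_lowMask_sq hr]

lemma Zmat_sq (r : ℕ) (q : EuclideanSpace ℝ (Fin n) × EuclideanSpace ℝ (Fin n)) :
    Zmat r q ^ 2 = (n : ℝ) ^ 4 •
      (maskedQuartic (lowMask n r) (highMask n r) (highMask n r) q.1
          ⊗ₖ maskedQuartic 1 (lowMask n r) (lowMask n r) q.2
        + maskedQuartic (highMask n r) (lowMask n r) (lowMask n r) q.1
          ⊗ₖ maskedQuartic (lowMask n r) 1 1 q.2) := by
  have hZ : Zmat r q = (n : ℝ) ^ 2 •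
      (vecMulVec (highMask n r * ⇑q.1) (lowMask n r * ⇑q.1)
          ⊗ₖ vecMulVec (lowMask n r * ⇑q.2) ((1 : Fin n → ℝ) * ⇑q.2)
        + vecMulVec (lowMask n r * ⇑q.1) (highMask n r * ⇑q.1)
          ⊗ₖ vecMulVec ((1 : Fin n → ℝ) * ⇑q.2) (lowMask n r * ⇑q.2)) := by
    simp only [Zmat, truncLow_eq_lowMask_mul, truncHigh_eq_highMask_mul, one_mul, smul_add]
  rw [hZ, smul_pow, vecMulVec_kronecker_add_sq _ _ _ _
    (lowMask_mul_dotProduct_highMask_mul r _), ← pow_mul]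
  rfl

lemma IsUniformOnSphere.matrixIntegral_Zmat_sq {μ : Measure (EuclideanSpace ℝ (Fin n))}
    (hμ : IsUniformOnSphere μ) (r : ℕ) :
    matrixIntegral (μ.prod μ) (fun q => Zmat r q ^ 2) = diagonal fun x : Fin n × Fin n =>
      (n : ℝ) ^ 4 * (maskedQuarticMean (lowMask n r) (highMask n r) (highMask n r) x.1
          * maskedQuarticMean 1 (lowMask n r) (lowMask n r) x.2
        + maskedQuarticMean (highMask n r) (lowMask n r) (lowMask n r) x.1
          * maskedQuarticMean (lowMask n r) 1 1 x.2) := by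
  have := hμ.1
  simp_rw [Zmat_sq]
  rw [matrixIntegral_smul, matrixIntegral_add (hμ.integrable_maskedQuartic_kronecker _ _ _ _ _ _)
      (hμ.integrable_maskedQuartic_kronecker _ _ _ _ _ _),
    matrixIntegral_prod_kronecker, matrixIntegral_prod_kronecker, hμ.matrixIntegral_maskedQuartic,
    hμ.matrixIntegral_maskedQuartic, hμ.matrixIntegral_maskedQuartic,
    hμ.matrixIntegral_maskedQuartic, diagonal_kronecker_diagonal, diagonal_kronecker_diagonal,
    diagonal_add, ← diagonal_smul]
  rfl

lemma Zmat_sq_diag_le {r : ℕ} (hr : r ≤ n) (i j : Fin n) :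
    (n : ℝ) ^ 4 * (maskedQuarticMean (lowMask n r) (highMask n r) (highMask n r) i
          * maskedQuarticMean 1 (lowMask n r) (lowMask n r) j
        + maskedQuarticMean (highMask n r) (lowMask n r) (lowMask n r) i
          * maskedQuarticMean (lowMask n r) 1 1 j) ≤ 4 * n * r := by
  have hn : (0 : ℝ) < n := Nat.cast_pos.mpr i.pos
  have hnr : (0 : ℝ) ≤ n - r := sub_nonneg.mpr (by exact_mod_cast hr)
  have hr0 : (0 : ℝ) ≤ r := r.cast_nonneg
  simp only [maskedQuarticMean, sum_lowMask_sq hr, sum_highMask_sq hr, Pi.one_apply, one_pow,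
    Finset.sum_const, Finset.card_univ, Fintype.card_fin, nsmul_eq_mul, mul_one]
  by_cases hi : (i : ℕ) < r
  · have hr1 : (1 : ℝ) ≤ r := by exact_mod_cast Nat.one_le_of_lt hi
    by_cases hj : (j : ℕ) < r <;>
    · simp only [lowMask, highMask, hi, hj, if_true, if_false, not_le.mpr]
      norm_num
      field_simp
      nlinarith [mul_nonneg (mul_nonneg hn.le hnr) (sub_nonneg.mpr hr1), mul_nonneg hn.le hr0,
        mul_nonneg (mul_nonneg hn.le hr0) hr0, mul_nonneg (mul_nonneg hn.le hr0) hnr]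
  · have hi' : r ≤ (i : ℕ) := not_lt.mp hi
    by_cases hj : (j : ℕ) < r <;>
    · simp only [lowMask, highMask, hi, hi', hj, if_true, if_false]
      norm_num
      field_simp
      nlinarith [mul_nonneg hn.le hr0, mul_nonneg (mul_nonneg hn.le hr0) hn.le]

end UniformSphere

/-- for `u, v` independent uniform on `S^{n-1}` and `r ≤ n`,
`E[Z²] ⪯ 4nr · I_{n²}` in the Loewner order. -/
theorem stmt_13 {n r : ℕ} (hr : r ≤ n) (μ : Measure (EuclideanSpace ℝ (Fin n)))
    (hμ : IsUniformOnSphere μ) :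
    Matrix.PosSemidef
      ((4 * (n : ℝ) * (r : ℝ)) • (1 : Matrix (Fin n × Fin n) (Fin n × Fin n) ℝ)
        - Matrix.of fun i j => ∫ q, ((Zmat r q) ^ 2) i j ∂(μ.prod μ)) := by
  change PosSemidef (_ - matrixIntegral (μ.prod μ) fun q => Zmat r q ^ 2)
  rw [hμ.matrixIntegral_Zmat_sq, smul_one_eq_diagonal, diagonal_sub]
  exact posSemidef_diagonal_iff.mpr fun x => sub_nonneg.mpr (Zmat_sq_diag_le hr x.1 x.2)
end

section
/- Let S : R^{n×n} → R^{n×n} be a self-adjoint positive semidefinite linear operator (with respect to the Frobenius inner product), P_T an orthogonal projection operator onto a subspace T of R^{n×n}, and suppose ‖P_T S P_T - P_T‖ ≤ 1/4 in operator norm (viewing operators as n²×n² matrices) and ‖S‖ ≤ n². If Δ ∈ R^{n×n} satisfies S(Δ) = 0, then ‖P_T Δ‖_2 ≤ 2n ‖(I - P_T)Δ‖_2, where ‖·‖_2 is the Frobenius norm. -/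
/-!
Split `Δ = x + y` with `x = P Δ` and `y = Δ - P Δ`. As `S Δ = 0` and `S` is symmetric,
`⟪x, S x⟫ = ⟪y, S y⟫`. Since `P S P` is `1/4`-close to `P`, `S` is bounded below by `3/4` on the
range of `P`, so `⟪x, S x⟫ ≥ (3/4) ‖x‖²`; and `‖S‖ ≤ n²` gives `⟪y, S y⟫ ≤ n² ‖y‖²`.
Hence `‖x‖² ≤ (4/3) n² ‖y‖² ≤ 4 n² ‖y‖²`. Flattening matrices makes the Frobenius structure
Euclidean, so the argument runs in an arbitrary real inner product space.
-/

open Matrix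

/-- The Frobenius inner product `⟨A, B⟩ = tr(Aᵀ B)` on real matrices. -/
def finner {n : ℕ} (A B : Matrix (Fin n) (Fin n) ℝ) : ℝ := (Aᵀ * B).trace

/-- The Frobenius norm `‖A‖₂ = √tr(Aᵀ A)`. -/
noncomputable def frob {n : ℕ} (A : Matrix (Fin n) (Fin n) ℝ) : ℝ :=
  Real.sqrt ((Aᵀ * A).trace)

open scoped RealInnerProductSpace

section InnerProductSpace

variable {E : Type*} [NormedAddCommGroup E] [InnerProductSpace ℝ E]

lemma LinearMap.IsSymmetric.inner_map_self_eq_of_map_add_eq_zero {S : E →ₗ[ℝ] E}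
    (hS : S.IsSymmetric) {x y : E} (h : S (x + y) = 0) : ⟪y, S y⟫ = ⟪x, S x⟫ := by
  have hSy : S y = -S x := eq_neg_of_add_eq_zero_right (by rwa [← map_add])
  rw [hSy, inner_neg_right, ← hS, real_inner_comm, hSy, inner_neg_right, neg_neg]

lemma real_inner_map_self_le {S : E →ₗ[ℝ] E} {c : ℝ} (hS : ∀ x, ‖S x‖ ≤ c * ‖x‖) (x : E) :
    ⟪x, S x⟫ ≤ c * ‖x‖ ^ 2 :=
  calc ⟪x, S x⟫ ≤ ‖x‖ * ‖S x‖ := real_inner_le_norm _ _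
    _ ≤ ‖x‖ * (c * ‖x‖) := by gcongr; exact hS x
    _ = c * ‖x‖ ^ 2 := by ring

lemma le_real_inner_map_self_of_norm_compression_sub_le {S P : E →ₗ[ℝ] E} {ε : ℝ}
    (hP : P.IsSymmetric) (hPSP : ∀ x, ‖P (S (P x)) - P x‖ ≤ ε * ‖x‖) {x : E} (hx : P x = x) :
    (1 - ε) * ‖x‖ ^ 2 ≤ ⟪x, S x⟫ := by
  have hdecomp : ⟪x, S x⟫ = ‖x‖ ^ 2 + ⟪x, P (S (P x)) - P x⟫ := by
    rw [hx, inner_sub_right, ← hP, hx, real_inner_self_eq_norm_sq]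
    ring
  have herr : |⟪x, P (S (P x)) - P x⟫| ≤ ‖x‖ * (ε * ‖x‖) :=
    (abs_real_inner_le_norm _ _).trans (by gcongr; exact hPSP x)
  rw [hdecomp]
  nlinarith [neg_abs_le ⟪x, P (S (P x)) - P x⟫]

theorem norm_sq_map_le_of_map_eq_zero {S P : E →ₗ[ℝ] E} {ε c : ℝ} (hS : S.IsSymmetric)
    (hSnorm : ∀ x, ‖S x‖ ≤ c * ‖x‖) (hPidem : ∀ x, P (P x) = P x) (hP : P.IsSymmetric)
    (hPSP : ∀ x, ‖P (S (P x)) - P x‖ ≤ ε * ‖x‖) {Δ : E} (hΔ : S Δ = 0) :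
    (1 - ε) * ‖P Δ‖ ^ 2 ≤ c * ‖Δ - P Δ‖ ^ 2 :=
  calc (1 - ε) * ‖P Δ‖ ^ 2 ≤ ⟪P Δ, S (P Δ)⟫ :=
        le_real_inner_map_self_of_norm_compression_sub_le hP hPSP (hPidem Δ)
    _ = ⟪Δ - P Δ, S (Δ - P Δ)⟫ :=
        (hS.inner_map_self_eq_of_map_add_eq_zero (by rwa [add_sub_cancel])).symm
    _ ≤ c * ‖Δ - P Δ‖ ^ 2 := real_inner_map_self_le hSnorm _

end InnerProductSpace

noncomputable def frobIso (n : ℕ) :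
    Matrix (Fin n) (Fin n) ℝ ≃ₗ[ℝ] EuclideanSpace ℝ (Fin n × Fin n) :=
  (ofLinearEquiv ℝ).symm ≪≫ₗ (LinearEquiv.curry ℝ ℝ _ _).symm ≪≫ₗ (WithLp.linearEquiv 2 ℝ _).symm

lemma finner_eq_inner {n : ℕ} (A B : Matrix (Fin n) (Fin n) ℝ) :
    finner A B = ⟪frobIso n A, frobIso n B⟫ := by
  simp only [finner, trace, diag, mul_apply, transpose_apply, PiLp.inner_apply,
    Fintype.sum_prod_type, RCLike.inner_apply, conj_trivial]
  change _ = ∑ i, ∑ j, B i j * A i j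
  rw [Finset.sum_comm]
  simp_rw [mul_comm]

lemma frob_eq_norm {n : ℕ} (A : Matrix (Fin n) (Fin n) ℝ) : frob A = ‖frobIso n A‖ := by
  rw [frob, ← finner, finner_eq_inner, real_inner_self_eq_norm_sq, Real.sqrt_sq (norm_nonneg _)]

lemma isSymmetric_conj_frobIso {n : ℕ} {T : Matrix (Fin n) (Fin n) ℝ →ₗ[ℝ] Matrix (Fin n) (Fin n) ℝ}
    (hT : ∀ A B, finner (T A) B = finner A (T B)) : ((frobIso n).conj T).IsSymmetric := by
  intro x y
  simpa [finner_eq_inner] using hT ((frobIso n).symm x) ((frobIso n).symm y)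

theorem stmt_14_general {n : ℕ}
    (S P : Matrix (Fin n) (Fin n) ℝ →ₗ[ℝ] Matrix (Fin n) (Fin n) ℝ)
    (hSsa : ∀ A B, finner (S A) B = finner A (S B))
    (hSnorm : ∀ A, frob (S A) ≤ (n : ℝ) ^ 2 * frob A)
    (hPidem : ∀ A, P (P A) = P A)
    (hPsa : ∀ A B, finner (P A) B = finner A (P B))
    (hPSP : ∀ A, frob (P (S (P A)) - P A) ≤ (1 / 4) * frob A)
    (Δ : Matrix (Fin n) (Fin n) ℝ) (hΔ : S Δ = 0) :
    frob (P Δ) ≤ 2 * (n : ℝ) * frob (Δ - P Δ) := by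
  have key := norm_sq_map_le_of_map_eq_zero (isSymmetric_conj_frobIso hSsa)
    (c := (n : ℝ) ^ 2) (fun x => by simpa [frob_eq_norm] using hSnorm ((frobIso n).symm x))
    (fun x => by simp [hPidem]) (isSymmetric_conj_frobIso hPsa)
    (ε := 1 / 4) (fun x => by simpa [frob_eq_norm] using hPSP ((frobIso n).symm x))
    (Δ := frobIso n Δ) (by simp [hΔ])
  simp only [LinearEquiv.conj_apply_apply, LinearEquiv.symm_apply_apply, ← map_sub,
    ← frob_eq_norm] at key
  rw [← pow_le_pow_iff_left₀ (by rw [frob_eq_norm]; positivity)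
    (by rw [frob_eq_norm]; positivity) two_ne_zero]
  nlinarith

/-- Let `S` be a self-adjoint positive semidefinite linear operator on
`ℝ^{n×n}` (w.r.t. the Frobenius inner product) with `‖S‖ ≤ n²`, and `P_T` an orthogonal
projection (idempotent and self-adjoint) such that `‖P_T S P_T - P_T‖ ≤ 1/4` in operator
norm.  If `S(Δ) = 0`, then `‖P_T Δ‖₂ ≤ 2n ‖(I - P_T) Δ‖₂` in Frobenius norm. -/
theorem stmt_14 {n : ℕ}
    (S P : Matrix (Fin n) (Fin n) ℝ →ₗ[ℝ] Matrix (Fin n) (Fin n) ℝ)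
    (hSsa : ∀ A B, finner (S A) B = finner A (S B))
    (hSpsd : ∀ A, 0 ≤ finner A (S A))
    (hSnorm : ∀ A, frob (S A) ≤ (n : ℝ) ^ 2 * frob A)
    (hPidem : ∀ A, P (P A) = P A)
    (hPsa : ∀ A B, finner (P A) B = finner A (P B))
    (hPSP : ∀ A, frob (P (S (P A)) - P A) ≤ (1 / 4) * frob A)
    (Δ : Matrix (Fin n) (Fin n) ℝ) (hΔ : S Δ = 0) :
    frob (P Δ) ≤ 2 * (n : ℝ) * frob (Δ - P Δ) :=
  stmt_14_general S P hSsa hSnorm hPidem hPsa hPSP Δ hΔ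
end
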